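/- Let Γ act without inversion on a tree 𝒯 and let e ∈ E(𝒯) be an edge such that the smallest subtrees containing Γ·s(e) and containing Γ·r(e) are both all of 𝒯. If the quotient graph 𝒯/Γ minus the edges e, ē is disconnected, then Γ ≅ Γ₁ *_Σ Γ₂ is a non-trivial amalgamated free product over Σ = Stab(e): that is, Γ₁ ≠ Σ and Γ₂ ≠ Σ, where Γᵢ are the fundamental groups of the graph of groups restricted to the two connected components. -/

import Mathlib

/-!
Remove from `T` the whole orbit `Γ·e`; the components of what is left are the lifts of the
components of `T/Γ ∖ {e, ē}`, and `Γ₁, Γ₂` are the stabilizers of the components of `a` and `b`.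
Disconnectedness of the quotient says that no translate of `b` lies in the component of `a`, so
following any path of `T` and recording which translate of `e` it crosses shows `Γ = ⟨Γ₁, Γ₂⟩`.
Injectivity of `Γ₁ *_Σ Γ₂ → Γ` is a ping-pong on the two sides of the bridge `e`: an element of
`Γ₁ ∖ Σ` maps the side of `b` and both ends of `e` into the side of `a`, and symmetrically, so a
reduced word moves `e` off itself and is not in `Σ`. Finally `Γ₁ = Σ` would give `Γ = Γ₂`, so the
component of `b` would contain `Γ·b` and hence the subtree spanned by it, which is all of `T`;
this contradicts disconnectedness, and likewise for `Γ₂`.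
-/

open scoped Pointwise

namespace Monoid.PushoutI

variable {ι : Type*} {G : ι → Type*} {H K : Type*} [∀ i, Group (G i)] [Group H] [Group K]
  {φ : ∀ i, H →* G i}

theorem exists_reduced_eq_base_mul (hφ : ∀ i, Function.Injective (φ i)) (x : PushoutI φ) :
    ∃ (h : H) (w : CoprodI.Word G), Reduced φ w ∧ x = base φ h * ofCoprodI w.prod := by
  classical
  obtain ⟨d⟩ := NormalWord.transversal_nonempty φ hφ
  set w := NormalWord.equiv (d := d) x
  refine ⟨w.head, w.toWord, fun ⟨i, g⟩ hg hrange => w.ne_one _ hg ?_,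
    (NormalWord.equiv.symm_apply_apply x).symm⟩
  -- the letters of a normal word lie in the transversal, which meets the base only in `1`
  exact (((d.compl i).equiv_snd_eq_self_iff_mem (one_mem _)).2 (w.normalized i g hg)).symm.trans
    (((d.compl i).coe_equiv_snd_eq_one_iff_mem (d.one_mem i)).2 hrange)

theorem lift_ofCoprodI (f : ∀ i, G i →* K) (k : H →* K) (hf : ∀ i, (f i).comp (φ i) = k)
    (x : CoprodI G) : lift f k hf (ofCoprodI x) = CoprodI.lift f x := by
  induction x using CoprodI.induction_on with
  | one => simp
  | of i g => simp [ofCoprodI_of]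
  | mul x y hx hy => simp [hx, hy]

theorem lift_injective_of_reduced (hφ : ∀ i, Function.Injective (φ i)) (f : ∀ i, G i →* K)
    (k : H →* K) (hf : ∀ i, (f i).comp (φ i) = k) (hk : Function.Injective k)
    (hw : ∀ w : CoprodI.Word G, Reduced φ w → w ≠ .empty → CoprodI.lift f w.prod ∉ k.range) :
    Function.Injective (lift f k hf) := by
  refine (injective_iff_map_eq_one _).2 fun x hx => ?_
  obtain ⟨h, w, hred, rfl⟩ := exists_reduced_eq_base_mul hφ x
  rw [map_mul, lift_base, lift_ofCoprodI] at hx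
  obtain rfl : w = .empty := by
    by_contra hne
    exact hw w hred hne ⟨h⁻¹, by rw [map_inv]; exact (eq_inv_of_mul_eq_one_right hx).symm⟩
  rw [CoprodI.Word.prod_empty, map_one, mul_one] at hx ⊢
  rw [hk (hx.trans k.map_one.symm), map_one]

theorem lift_surjective_of_iSup_range (f : ∀ i, G i →* K) (k : H →* K)
    (hf : ∀ i, (f i).comp (φ i) = k) (h : ⨆ i, (f i).range = ⊤) :
    Function.Surjective (lift f k hf) :=
  MonoidHom.range_eq_top.1 <| top_le_iff.1 <| h ▸ iSup_le fun i => by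
    rintro _ ⟨g, rfl⟩
    exact ⟨of i g, lift_of f k hf g⟩

theorem lift_subtype_bijective {S : Subgroup K} {Gs : ι → Subgroup K} (hle : ∀ i, S ≤ Gs i)
    (htop : ⨆ i, Gs i = ⊤)
    (hw : ∀ w : CoprodI.Word fun i => Gs i, (∀ l ∈ w.toList, (l.2 : K) ∉ S) → w ≠ .empty →
      CoprodI.lift (fun i => (Gs i).subtype) w.prod ∉ S) :
    Function.Bijective (lift (fun i => (Gs i).subtype) S.subtype
      fun i => Subgroup.subtype_comp_inclusion (hle i)) := by
  refine ⟨lift_injective_of_reduced (fun i => Subgroup.inclusion_injective (hle i)) _ _ _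
    S.subtype_injective fun w hred hne => ?_, lift_surjective_of_iSup_range _ _ _ ?_⟩
  · rw [Subgroup.range_subtype]
    refine hw w (fun l hl hS => hred l hl ?_) hne
    rwa [Subgroup.inclusion_range, Subgroup.mem_subgroupOf]
  · simpa only [Subgroup.range_subtype] using htop

end Monoid.PushoutI

namespace SimpleGraph

variable {V Γ : Type*} [Group Γ] [MulAction Γ V]

theorem Reachable.tail_induction_on {G : SimpleGraph V} {P : V → Prop} {a x : V}
    (hax : G.Reachable a x) (ha : P a)
    (step : ∀ ⦃y z : V⦄, G.Reachable a y → G.Adj y z → P y → P z) : P x := by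
  rw [reachable_iff_reflTransGen] at hax
  induction hax with
  | refl => exact ha
  | tail hay hyz ih => exact step ((reachable_iff_reflTransGen _ _).2 hay) hyz ih

theorem reachable_deleteEdges_iff_exists_walk_forall {G : SimpleGraph V} {s : Set (Sym2 V)}
    {u v : V} : (G.deleteEdges s).Reachable u v ↔ ∃ p : G.Walk u v, ∀ e ∈ p.edges, e ∉ s := by
  constructor
  · rintro ⟨p⟩
    refine ⟨p.mapLe (G.deleteEdges_le s), fun e he => ?_⟩
    rw [Walk.edges_mapLe_eq_edges] at he
    exact ((edgeSet_deleteEdges s ▸ p.edges_subset_edgeSet he) : e ∈ G.edgeSet \ s).2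
  · rintro ⟨p, hp⟩
    exact ⟨p.toDeleteEdges s hp⟩

theorem IsAcyclic.reachable_of_mem_support {T G : SimpleGraph V} (hT : T.IsAcyclic) (hGT : G ≤ T)
    {u v x : V} (huv : G.Reachable u v) {p : T.Walk u v} (hp : p.IsPath) (hx : x ∈ p.support) :
    G.Reachable u x := by
  classical
  obtain ⟨q⟩ := huv
  obtain rfl : p = q.bypass.mapLe hGT :=
    congrArg Subtype.val ((hT.subsingleton_path u v).elim ⟨p, hp⟩ ⟨_, q.bypass_isPath.mapLe hGT⟩)
  rw [Walk.support_mapLe_eq_support] at hx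
  exact (q.bypass.takeUntil x hx).reachable

theorem Reachable.smul {G : SimpleGraph V}
    (hG : ∀ (γ : Γ) (u v : V), G.Adj u v → G.Adj (γ • u) (γ • v)) (γ : Γ) {x y : V}
    (h : G.Reachable x y) : G.Reachable (γ • x) (γ • y) :=
  h.map ⟨(γ • ·), hG γ _ _⟩

theorem mem_stabilizer_connectedComponent_supp_iff {G : SimpleGraph V}
    (hG : ∀ (γ : Γ) (u v : V), G.Adj u v → G.Adj (γ • u) (γ • v)) {γ : Γ} {c : V} :
    γ ∈ MulAction.stabilizer Γ (G.connectedComponentMk c).supp ↔ G.Reachable c (γ • c) := by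
  rw [MulAction.mem_stabilizer_iff]
  constructor
  · intro h
    have : γ • c ∈ γ • (G.connectedComponentMk c).supp := Set.smul_mem_smul_set rfl
    rw [h, ConnectedComponent.mem_supp_iff, ConnectedComponent.eq] at this
    exact this.symm
  · intro h
    ext x
    simp only [Set.mem_smul_set_iff_inv_smul_mem, ConnectedComponent.mem_supp_iff,
      ConnectedComponent.eq]
    constructor
    · intro hx
      simpa using (hx.smul hG γ).trans h.symm
    · intro hx
      simpa using (hx.trans h).smul hG γ⁻¹

theorem stabilizer_connectedComponent_supp_ne_top {T G : SimpleGraph V} (hT : T.IsAcyclic)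
    (hGT : G ≤ T)
    (hG : ∀ (γ : Γ) (u v : V), G.Adj u v → G.Adj (γ • u) (γ • v)) {c : V}
    (hspan : ∀ x : V, ∃ (γ₁ γ₂ : Γ) (w : T.Walk (γ₁ • c) (γ₂ • c)), w.IsPath ∧ x ∈ w.support)
    (hdisc : ¬ ∀ u v : V, ∃ γ : Γ, G.Reachable u (γ • v)) :
    MulAction.stabilizer Γ (G.connectedComponentMk c).supp ≠ ⊤ := by
  intro htop
  have hc (γ : Γ) : G.Reachable c (γ • c) :=
    (mem_stabilizer_connectedComponent_supp_iff hG).1 (htop ▸ trivial)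
  have hall (x : V) : G.Reachable c x := by
    obtain ⟨γ₁, γ₂, w, hw, hx⟩ := hspan x
    exact (hc γ₁).trans (hT.reachable_of_mem_support hGT ((hc γ₁).symm.trans (hc γ₂)) hw hx)
  exact hdisc fun u v => ⟨1, by rw [one_smul]; exact (hall u).symm.trans (hall v)⟩

variable (Γ) in
/-- The lift to `T` of the quotient graph `T/Γ` with the edges `e, ē` removed, `e = s(a, b)`. -/
def deleteEdgeOrbit (T : SimpleGraph V) (a b : V) : SimpleGraph V :=
  T.deleteEdges (Set.range fun γ : Γ => s(γ • a, γ • b))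

variable {T : SimpleGraph V} {a b : V}

theorem deleteEdgeOrbit_adj {x y : V} :
    (T.deleteEdgeOrbit Γ a b).Adj x y ↔ T.Adj x y ∧
      ¬ ∃ δ : Γ, (x = δ • a ∧ y = δ • b) ∨ (x = δ • b ∧ y = δ • a) := by
  simp [deleteEdgeOrbit, eq_comm]

theorem deleteEdgeOrbit_le : T.deleteEdgeOrbit Γ a b ≤ T.deleteEdges {s(a, b)} :=
  deleteEdges_anti (Set.singleton_subset_iff.2 ⟨1, by simp⟩)

theorem reachable_deleteEdgeOrbit_iff {u v : V} :
    (T.deleteEdgeOrbit Γ a b).Reachable u v ↔ ∃ w : T.Walk u v, ∀ d ∈ w.darts, ¬ ∃ δ : Γ,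
      (d.toProd.1 = δ • a ∧ d.toProd.2 = δ • b) ∨ (d.toProd.1 = δ • b ∧ d.toProd.2 = δ • a) := by
  simp only [deleteEdgeOrbit, reachable_deleteEdges_iff_exists_walk_forall, Walk.edges,
    List.forall_mem_map, Set.mem_range]
  refine exists_congr fun w => forall₂_congr fun d _ => not_congr <| exists_congr fun δ => ?_
  rw [eq_comm, Dart.edge, Sym2.eq_iff]

theorem deleteEdgeOrbit_adj_smul (hact : ∀ (γ : Γ) (u v : V), T.Adj u v → T.Adj (γ • u) (γ • v))
    (γ : Γ) (x y : V) (h : (T.deleteEdgeOrbit Γ a b).Adj x y) :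
    (T.deleteEdgeOrbit Γ a b).Adj (γ • x) (γ • y) := by
  rw [deleteEdgeOrbit_adj] at h ⊢
  refine ⟨hact γ x y h.1, fun ⟨δ, hδ⟩ => h.2 ⟨γ⁻¹ * δ, ?_⟩⟩
  simpa only [mul_smul, eq_inv_smul_iff] using hδ

theorem exists_eq_smul_cond_of_not_adj_deleteEdgeOrbit {y z : V} (hyz : T.Adj y z)
    (h : ¬ (T.deleteEdgeOrbit Γ a b).Adj y z) :
    ∃ (δ : Γ) (j : Bool), y = δ • cond j a b ∧ z = δ • cond (!j) a b := by
  rw [deleteEdgeOrbit_adj, not_and, not_not] at h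
  obtain ⟨δ, h | h⟩ := h hyz
  exacts [⟨δ, true, h⟩, ⟨δ, false, h⟩]

theorem exists_reachable_deleteEdgeOrbit_smul_cond (hT : T.Preconnected) (x : V) :
    ∃ (δ : Γ) (j : Bool), (T.deleteEdgeOrbit Γ a b).Reachable (δ • cond j a b) x := by
  refine (hT a x).tail_induction_on (P := fun x => ∃ (δ : Γ) (j : Bool),
    (T.deleteEdgeOrbit Γ a b).Reachable (δ • cond j a b) x) ⟨1, true, by rw [one_smul]; rfl⟩
    fun y z _ hyz ⟨δ, j, hδ⟩ => ?_
  by_cases hyz' : (T.deleteEdgeOrbit Γ a b).Adj y z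
  · exact ⟨δ, j, hδ.trans hyz'.reachable⟩
  · obtain ⟨δ', j', -, rfl⟩ := exists_eq_smul_cond_of_not_adj_deleteEdgeOrbit hyz hyz'
    exact ⟨δ', !j', .rfl⟩

theorem not_reachable_deleteEdgeOrbit_smul (hT : T.Preconnected)
    (hact : ∀ (γ : Γ) (u v : V), T.Adj u v → T.Adj (γ • u) (γ • v))
    (hdisc : ¬ ∀ u v : V, ∃ γ : Γ, (T.deleteEdgeOrbit Γ a b).Reachable u (γ • v)) (γ : Γ) :
    ¬ (T.deleteEdgeOrbit Γ a b).Reachable a (γ • b) := by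
  intro hγ
  have hG := deleteEdgeOrbit_adj_smul (Γ := Γ) (a := a) (b := b) hact
  have reach_a (x : V) : ∃ δ : Γ, (T.deleteEdgeOrbit Γ a b).Reachable (δ • a) x := by
    obtain ⟨δ, j, hδ⟩ := exists_reachable_deleteEdgeOrbit_smul_cond (Γ := Γ) (a := a) (b := b) hT x
    cases j
    · exact ⟨δ * γ⁻¹, (hγ.smul hG (δ * γ⁻¹)).trans (by simpa [mul_smul] using hδ)⟩
    · exact ⟨δ, hδ⟩
  refine hdisc fun u v => ?_
  obtain ⟨δ₁, h₁⟩ := reach_a u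
  obtain ⟨δ₂, h₂⟩ := reach_a v
  exact ⟨δ₁ * δ₂⁻¹, h₁.symm.trans (by simpa [mul_smul] using h₂.smul hG (δ₁ * δ₂⁻¹))⟩

theorem eq_of_reachable_deleteEdgeOrbit_smul_cond (hT : T.Preconnected)
    (hact : ∀ (γ : Γ) (u v : V), T.Adj u v → T.Adj (γ • u) (γ • v))
    (hdisc : ¬ ∀ u v : V, ∃ γ : Γ, (T.deleteEdgeOrbit Γ a b).Reachable u (γ • v))
    {γ δ : Γ} {i j : Bool}
    (h : (T.deleteEdgeOrbit Γ a b).Reachable (γ • cond i a b) (δ • cond j a b)) : i = j := by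
  have hG := deleteEdgeOrbit_adj_smul (Γ := Γ) (a := a) (b := b) hact
  cases i <;> cases j
  · rfl
  · exact (not_reachable_deleteEdgeOrbit_smul hT hact hdisc (δ⁻¹ * γ)
      (by simpa [mul_smul] using h.symm.smul hG δ⁻¹)).elim
  · exact (not_reachable_deleteEdgeOrbit_smul hT hact hdisc (γ⁻¹ * δ)
      (by simpa [mul_smul] using h.smul hG γ⁻¹)).elim
  · rfl

variable (Γ) in
/-- The vertex groups `Γ₁` (`i = true`) and `Γ₂` (`i = false`) of the splitting. -/
def componentStabilizer (T : SimpleGraph V) (a b : V) (i : Bool) : Subgroup Γ :=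
  MulAction.stabilizer Γ ((T.deleteEdgeOrbit Γ a b).connectedComponentMk (cond i a b)).supp

theorem mem_componentStabilizer
    (hact : ∀ (γ : Γ) (u v : V), T.Adj u v → T.Adj (γ • u) (γ • v)) {γ : Γ} {i : Bool} :
    γ ∈ T.componentStabilizer Γ a b i ↔
      (T.deleteEdgeOrbit Γ a b).Reachable (cond i a b) (γ • cond i a b) :=
  mem_stabilizer_connectedComponent_supp_iff (deleteEdgeOrbit_adj_smul hact)

theorem stabilizer_inf_stabilizer_le_componentStabilizer
    (hact : ∀ (γ : Γ) (u v : V), T.Adj u v → T.Adj (γ • u) (γ • v)) (i : Bool) :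
    MulAction.stabilizer Γ a ⊓ MulAction.stabilizer Γ b ≤ T.componentStabilizer Γ a b i := by
  rintro σ ⟨hσa, hσb⟩
  rw [mem_componentStabilizer hact]
  cases i
  · rw [cond_false, MulAction.mem_stabilizer_iff.1 hσb]
  · rw [cond_true, MulAction.mem_stabilizer_iff.1 hσa]

theorem iSup_componentStabilizer_eq_top (hT : T.Preconnected)
    (hact : ∀ (γ : Γ) (u v : V), T.Adj u v → T.Adj (γ • u) (γ • v))
    (hdisc : ¬ ∀ u v : V, ∃ γ : Γ, (T.deleteEdgeOrbit Γ a b).Reachable u (γ • v)) :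
    ⨆ i, T.componentStabilizer Γ a b i = ⊤ := by
  set H := ⨆ i, T.componentStabilizer Γ a b i
  have hG := deleteEdgeOrbit_adj_smul (Γ := Γ) (a := a) (b := b) hact
  have hmem {h δ : Γ} {i j : Bool} (hh : h ∈ H)
      (hr : (T.deleteEdgeOrbit Γ a b).Reachable (h • cond i a b) (δ • cond j a b)) : δ ∈ H := by
    obtain rfl := eq_of_reachable_deleteEdgeOrbit_smul_cond hT hact hdisc hr
    have : h⁻¹ * δ ∈ T.componentStabilizer Γ a b i :=
      (mem_componentStabilizer hact).2 (by simpa [mul_smul] using hr.smul hG h⁻¹)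
    simpa using mul_mem hh (le_iSup (T.componentStabilizer Γ a b) i this)
  have hcover (x : V) :
      ∃ h ∈ H, ∃ i, (T.deleteEdgeOrbit Γ a b).Reachable (h • cond i a b) x := by
    refine (hT a x).tail_induction_on (P := fun x => ∃ h ∈ H, ∃ i,
      (T.deleteEdgeOrbit Γ a b).Reachable (h • cond i a b) x) ⟨1, one_mem H, true, by simp⟩
      fun y z _ hyz ⟨h, hh, i, hr⟩ => ?_
    by_cases hyz' : (T.deleteEdgeOrbit Γ a b).Adj y z
    · exact ⟨h, hh, i, hr.trans hyz'.reachable⟩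
    · obtain ⟨δ, j, rfl, rfl⟩ := exists_eq_smul_cond_of_not_adj_deleteEdgeOrbit hyz hyz'
      exact ⟨δ, hmem hh hr, !j, .rfl⟩
  refine eq_top_iff.2 fun γ _ => ?_
  obtain ⟨h, hh, i, hr⟩ := hcover (γ • a)
  exact hmem (j := true) hh hr

variable (T) in
def bridgeSide (a b : V) (i : Bool) : Set V :=
  {x | (T.deleteEdges {s(a, b)}).Reachable (cond i a b) x}

theorem mem_bridgeSide {i : Bool} {x : V} :
    x ∈ T.bridgeSide a b i ↔ (T.deleteEdges {s(a, b)}).Reachable (cond i a b) x :=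
  Iff.rfl

theorem disjoint_bridgeSide (hT : T.IsAcyclic) (hab : T.Adj a b) (i : Bool) :
    Disjoint (T.bridgeSide a b i) (T.bridgeSide a b !i) := by
  have hbridge := isBridge_iff.1 (isAcyclic_iff_forall_adj_isBridge.1 hT hab)
  refine Set.disjoint_left.2 fun x h₁ h₂ => hbridge ?_
  cases i
  exacts [h₂.trans h₁.symm, h₁.trans h₂.symm]

theorem smul_cond_mem_bridgeSide
    (hact : ∀ (γ : Γ) (u v : V), T.Adj u v → T.Adj (γ • u) (γ • v))
    (hnoinv : ∀ (γ : Γ) (u v : V), T.Adj u v → ¬(γ • u = v ∧ γ • v = u)) (hab : T.Adj a b)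
    {g : Γ} {i : Bool} (hg : g ∈ T.componentStabilizer Γ a b i)
    (hgS : g ∉ MulAction.stabilizer Γ a ⊓ MulAction.stabilizer Γ b) (j : Bool) :
    g • cond j a b ∈ T.bridgeSide a b i := by
  have hside : g • cond i a b ∈ T.bridgeSide a b i :=
    ((mem_componentStabilizer hact).1 hg).mono deleteEdgeOrbit_le
  have hedge : (T.deleteEdges {s(a, b)}).Adj (g • a) (g • b) := by
    refine deleteEdges_adj.2 ⟨hact g a b hab, fun he => ?_⟩
    rcases Sym2.eq_iff.1 (Set.mem_singleton_iff.1 he) with h | h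
    · exact hgS ⟨h.1, h.2⟩
    · exact hnoinv g a b hab h
  rw [mem_bridgeSide] at hside ⊢
  cases i <;> cases j
  exacts [hside, hside.trans hedge.reachable.symm, hside.trans hedge.reachable, hside]

theorem smul_mem_bridgeSide (hT : T.IsAcyclic)
    (hact : ∀ (γ : Γ) (u v : V), T.Adj u v → T.Adj (γ • u) (γ • v))
    (hnoinv : ∀ (γ : Γ) (u v : V), T.Adj u v → ¬(γ • u = v ∧ γ • v = u)) (hab : T.Adj a b)
    {g : Γ} {i : Bool} (hg : g ∈ T.componentStabilizer Γ a b i)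
    (hgS : g ∉ MulAction.stabilizer Γ a ⊓ MulAction.stabilizer Γ b) {x : V}
    (hx : x ∈ T.bridgeSide a b !i) : g • x ∈ T.bridgeSide a b i := by
  have hgS' : g⁻¹ ∉ MulAction.stabilizer Γ a ⊓ MulAction.stabilizer Γ b :=
    fun h => hgS (by simpa using inv_mem h)
  refine Reachable.tail_induction_on (P := fun y => g • y ∈ T.bridgeSide a b i) hx
    (smul_cond_mem_bridgeSide hact hnoinv hab hg hgS _) fun y z hy hyz hgy => ?_
  by_cases he : s(g • y, g • z) ∈ ({s(a, b)} : Set (Sym2 V))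
  · -- then `y` is a `g⁻¹`-translate of `a` or `b`, so it lies on side `i`
    obtain ⟨j, hj⟩ : ∃ j, g • y = cond j a b := by
      rcases Sym2.eq_iff.1 (Set.mem_singleton_iff.1 he) with h | h
      exacts [⟨true, h.1⟩, ⟨false, h.1⟩]
    have hy' : y ∈ T.bridgeSide a b i := by
      simpa [← hj] using smul_cond_mem_bridgeSide hact hnoinv hab (inv_mem hg) hgS' j
    exact (Set.disjoint_left.1 (disjoint_bridgeSide hT hab i) hy' hy).elim
  · exact hgy.trans (deleteEdges_adj.2 ⟨hact g y z (deleteEdges_adj.1 hyz).1, he⟩).reachable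

theorem lift_neWord_prod_ping_pong (hT : T.IsAcyclic)
    (hact : ∀ (γ : Γ) (u v : V), T.Adj u v → T.Adj (γ • u) (γ • v))
    (hnoinv : ∀ (γ : Γ) (u v : V), T.Adj u v → ¬(γ • u = v ∧ γ • v = u)) (hab : T.Adj a b)
    {i j : Bool} (w : Monoid.CoprodI.NeWord (fun i => T.componentStabilizer Γ a b i) i j)
    (hw : ∀ l ∈ w.toList, (l.2 : Γ) ∉ MulAction.stabilizer Γ a ⊓ MulAction.stabilizer Γ b) :
    Set.MapsTo (Monoid.CoprodI.lift (fun i => (T.componentStabilizer Γ a b i).subtype) w.prod • ·)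
        (T.bridgeSide a b !j) (T.bridgeSide a b i) ∧
      ∀ k, Monoid.CoprodI.lift (fun i => (T.componentStabilizer Γ a b i).subtype) w.prod •
        cond k a b ∈ T.bridgeSide a b i := by
  induction w with
  | singleton x _ =>
    have hxS := hw _ (List.mem_singleton_self _)
    simp only [Monoid.CoprodI.NeWord.prod_singleton, Monoid.CoprodI.lift_of,
      Subgroup.coe_subtype]
    exact ⟨fun y hy => smul_mem_bridgeSide hT hact hnoinv hab x.2 hxS hy,
      smul_cond_mem_bridgeSide hact hnoinv hab x.2 hxS⟩
  | append w₁ hne w₂ ih₁ ih₂ =>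
    simp only [Monoid.CoprodI.NeWord.toList, List.mem_append] at hw
    obtain ⟨h₁, -⟩ := ih₁ fun l hl => hw l (.inl hl)
    obtain ⟨h₂, h₂'⟩ := ih₂ fun l hl => hw l (.inr hl)
    obtain rfl := Bool.eq_not_of_ne hne.symm
    simp only [Monoid.CoprodI.NeWord.append_prod, map_mul, mul_smul]
    exact ⟨h₁.comp h₂, fun k => h₁ (h₂' k)⟩

theorem lift_word_prod_not_mem_stabilizer_inf_stabilizer (hT : T.IsAcyclic)
    (hact : ∀ (γ : Γ) (u v : V), T.Adj u v → T.Adj (γ • u) (γ • v))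
    (hnoinv : ∀ (γ : Γ) (u v : V), T.Adj u v → ¬(γ • u = v ∧ γ • v = u)) (hab : T.Adj a b)
    (w : Monoid.CoprodI.Word fun i => T.componentStabilizer Γ a b i)
    (hw : ∀ l ∈ w.toList, (l.2 : Γ) ∉ MulAction.stabilizer Γ a ⊓ MulAction.stabilizer Γ b)
    (hne : w ≠ .empty) :
    Monoid.CoprodI.lift (fun i => (T.componentStabilizer Γ a b i).subtype) w.prod ∉
      MulAction.stabilizer Γ a ⊓ MulAction.stabilizer Γ b := by
  obtain ⟨i, j, w, rfl⟩ := Monoid.CoprodI.NeWord.of_word w hne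
  rintro ⟨hSa, hSb⟩
  have hside := (lift_neWord_prod_ping_pong hT hact hnoinv hab w hw).2
  simp only [Monoid.CoprodI.NeWord.prod] at hside
  have ha : a ∈ T.bridgeSide a b i := by
    simpa [MulAction.mem_stabilizer_iff.1 hSa] using hside true
  have hb : b ∈ T.bridgeSide a b i := by
    simpa [MulAction.mem_stabilizer_iff.1 hSb] using hside false
  exact isBridge_iff.1 (isAcyclic_iff_forall_adj_isBridge.1 hT hab) (ha.symm.trans hb)

theorem componentStabilizer_ne_stabilizer_inf_stabilizer (hT : T.IsTree)
    (hact : ∀ (γ : Γ) (u v : V), T.Adj u v → T.Adj (γ • u) (γ • v))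
    (hdisc : ¬ ∀ u v : V, ∃ γ : Γ, (T.deleteEdgeOrbit Γ a b).Reachable u (γ • v)) {i : Bool}
    (hspan : ∀ x : V, ∃ (γ₁ γ₂ : Γ) (w : T.Walk (γ₁ • cond (!i) a b) (γ₂ • cond (!i) a b)),
      w.IsPath ∧ x ∈ w.support) :
    T.componentStabilizer Γ a b i ≠ MulAction.stabilizer Γ a ⊓ MulAction.stabilizer Γ b := by
  intro hi
  refine stabilizer_connectedComponent_supp_ne_top hT.2 (T.deleteEdges_le _)
    (deleteEdgeOrbit_adj_smul hact) hspan hdisc (top_le_iff.1 ?_)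
  rw [← iSup_componentStabilizer_eq_top hT.1.preconnected hact hdisc]
  refine iSup_le fun j => ?_
  rcases Bool.eq_or_eq_not j i with rfl | rfl
  exacts [hi ▸ stabilizer_inf_stabilizer_le_componentStabilizer hact _, le_rfl]

end SimpleGraph

open SimpleGraph

/-- **Dévissage, amalgam case.**  Let `Γ` act (by automorphisms, without inversion) on
a tree `T`, and let `e` be an edge with endpoints `a, b` such that the smallest
subtrees containing the orbits `Γ·a`, respectively `Γ·b`, are both all of `T`.  If
the quotient graph `T/Γ` minus the edges `e, ē` is disconnected (it is *not* the case
that any two vertices of `T` are joined, up to translating the second by `Γ`, by a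
path avoiding the orbit of `e`), then `Γ ≅ Γ₁ *_Σ Γ₂` is a *non-trivial* amalgamated
free product over `Σ = Stab(e)`: there are subgroups `Γ₁ = Gs true`, `Γ₂ = Gs false`
of `Γ`, both containing `S = Stab(e)` (the `γ` fixing both `a` and `b`), and an
isomorphism `ψ` from the amalgamated free product (the pushout of the two inclusions
of `S`) to `Γ` restricting to the inclusion on each `Γᵢ`, with `Γ₁ ≠ Σ ≠ Γ₂`. -/
theorem amalgam_decomposition_of_quotient_minus_edge_disconnected
    {V Γ : Type*} [Group Γ] [MulAction Γ V]
    (T : SimpleGraph V) (hT : T.IsTree)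
    (hact : ∀ (γ : Γ) (u v : V), T.Adj u v → T.Adj (γ • u) (γ • v))
    (hnoinv : ∀ (γ : Γ) (u v : V), T.Adj u v → ¬(γ • u = v ∧ γ • v = u))
    (a b : V) (hab : T.Adj a b)
    (hspan_a : ∀ x : V, ∃ (γ₁ γ₂ : Γ) (w : T.Walk (γ₁ • a) (γ₂ • a)),
      w.IsPath ∧ x ∈ w.support)
    (hspan_b : ∀ x : V, ∃ (γ₁ γ₂ : Γ) (w : T.Walk (γ₁ • b) (γ₂ • b)),
      w.IsPath ∧ x ∈ w.support)
    (hdisc : ¬ ∀ u v : V, ∃ (γ : Γ) (w : T.Walk u (γ • v)),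
      ∀ d ∈ w.darts, ¬ ∃ δ : Γ,
        (d.toProd.1 = δ • a ∧ d.toProd.2 = δ • b) ∨
        (d.toProd.1 = δ • b ∧ d.toProd.2 = δ • a)) :
    ∃ (Gs : Bool → Subgroup Γ)
      (hle : ∀ i : Bool, MulAction.stabilizer Γ a ⊓ MulAction.stabilizer Γ b ≤ Gs i)
      (ψ : Monoid.PushoutI (fun i : Bool => Subgroup.inclusion (hle i)) ≃* Γ),
      (∀ (i : Bool) (x : Gs i), ψ (Monoid.PushoutI.of i x) = (x : Γ)) ∧
      ∀ i : Bool, Gs i ≠ MulAction.stabilizer Γ a ⊓ MulAction.stabilizer Γ b := by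
  have hdisc' : ¬ ∀ u v : V, ∃ γ : Γ, (T.deleteEdgeOrbit Γ a b).Reachable u (γ • v) := by
    simpa only [reachable_deleteEdgeOrbit_iff] using hdisc
  have hle := stabilizer_inf_stabilizer_le_componentStabilizer (a := a) (b := b) hact
  have hbij := Monoid.PushoutI.lift_subtype_bijective hle
    (iSup_componentStabilizer_eq_top hT.1.preconnected hact hdisc')
    (lift_word_prod_not_mem_stabilizer_inf_stabilizer hT.2 hact hnoinv hab)
  refine ⟨T.componentStabilizer Γ a b, hle, MulEquiv.ofBijective _ hbij,
    fun _ x => Monoid.PushoutI.lift_of _ _ (fun i => Subgroup.subtype_comp_inclusion (hle i)) x,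
    fun i => ?_⟩
  cases i
  exacts [componentStabilizer_ne_stabilizer_inf_stabilizer hT hact hdisc' hspan_a,
    componentStabilizer_ne_stabilizer_inf_stabilizer hT hact hdisc' hspan_b]
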